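/- Let ℐ be a nonempty subset-closed family of admissible subsets of E_{±n} with the property that whenever I, J ∈ ℐ satisfy |I| < |J| and for all y ∈ J∖I the set {y} ∪ I is not in ℐ, then I ∪ J is inadmissible and there exists x ∉ I such that both {x} ∪ I and {−x} ∪ (I ∖ (−J)) are in ℐ. Let ℬ be the collection of maximal members of ℐ, let ≺ be an admissible total ordering of E_{±n}, let B be the member of ℬ chosen by the greedy algorithm with respect to ≺, and let B′ be any other member of ℬ. Then for every i with 1 ≤ i ≤ |B′|, the i-th largest element of B with respect to ≺ is no smaller than the i-th largest element of B′ with respect to ≺. -/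

import Mathlib

/-- The ground set `E_{±n} = {±1, ±2, …, ±n}` as a finite set of integers. -/
noncomputable def SympE (n : ℕ) : Finset ℤ := (Finset.Icc (-(n : ℤ)) (n : ℤ)).erase 0

/-- `negSet S = {-s : s ∈ S}`. -/
def negSet (S : Finset ℤ) : Finset ℤ := S.image (fun x => -x)

/-- A set `S` is admissible if `S ∩ (-S) = ∅`. -/
def IsAdmissibleSet (S : Finset ℤ) : Prop := ∀ s ∈ S, -s ∉ S

/-- An admissible permutation of `E_{±n}`: a permutation of `ℤ` mapping `E_{±n}` to
itself and commuting with negation.  It induces the admissible total ordering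
`x ≺ y ↔ w x < w y` on `E_{±n}`. -/
def IsAdmissiblePerm (n : ℕ) (w : Equiv.Perm ℤ) : Prop :=
  (∀ x ∈ SympE n, w x ∈ SympE n) ∧ ∀ x : ℤ, w (-x) = -(w x)

/-- A weight function `ω` compatible with the admissible ordering induced by `w`:
`i ≺ j` implies `ω i ≤ ω j`. -/
def IsCompatibleWeight (n : ℕ) (w : Equiv.Perm ℤ) (ω : ℤ → ℝ) : Prop :=
  ∀ i ∈ SympE n, ∀ j ∈ SympE n, w i < w j → ω i ≤ ω j

/-- The elements of `E_{±n}` listed from largest to smallest with respect to the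
admissible ordering induced by `w`. -/
noncomputable def orderList (n : ℕ) (w : Equiv.Perm ℤ) : List ℤ :=
  (((SympE n).sort (· ≤ ·)).reverse).map w.symm

/-- The greedy algorithm: processing the elements of the list in order, starting
with the current set `B`, pick up an element iff adding it keeps the current set
a subset of some member of `ℬ`.  Returns the list of picked-up elements in order. -/
def greedyAux (ℬ : Finset (Finset ℤ)) : List ℤ → Finset ℤ → List ℤ
  | [], _ => []
  | a :: l, B =>
      if ∃ B' ∈ ℬ, insert a B ⊆ B' then a :: greedyAux ℬ l (insert a B)
      else greedyAux ℬ l B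

/-- The list of elements picked up by the greedy algorithm on `ℬ`, in decreasing
order with respect to the admissible ordering induced by `w`. -/
noncomputable def greedyPicks (n : ℕ) (ℬ : Finset (Finset ℤ)) (w : Equiv.Perm ℤ) : List ℤ :=
  greedyAux ℬ (orderList n w) ∅

/-- The greedy solution of `ℬ` with respect to the admissible ordering induced
by `w`. -/
noncomputable def greedySol (n : ℕ) (ℬ : Finset (Finset ℤ)) (w : Equiv.Perm ℤ) : Finset ℤ :=
  (greedyPicks n ℬ w).toFinset

/-- `(E_{±n}, ℬ)` is a symplectic matroid: `ℬ` is a nonempty family of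
equinumerous admissible subsets of `E_{±n}` such that for every admissible
ordering and every compatible weight function the greedy solution is optimal. -/
def IsSymplecticMatroid (n : ℕ) (ℬ : Finset (Finset ℤ)) : Prop :=
  ℬ.Nonempty ∧
  (∀ B ∈ ℬ, B ⊆ SympE n ∧ IsAdmissibleSet B) ∧
  (∀ B ∈ ℬ, ∀ B' ∈ ℬ, B.card = B'.card) ∧
  (∀ w : Equiv.Perm ℤ, IsAdmissiblePerm n w →
    ∀ ω : ℤ → ℝ, IsCompatibleWeight n w ω →
      ∀ B' ∈ ℬ, ∑ b ∈ B', ω b ≤ ∑ b ∈ greedySol n ℬ w, ω b)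

/-- The family of independent sets of `(E_{±n}, ℬ)`:
all subsets of `E_{±n}` contained in some member of `ℬ`. -/
noncomputable def indepSets (n : ℕ) (ℬ : Finset (Finset ℤ)) : Finset (Finset ℤ) :=
  (SympE n).powerset.filter (fun I => ∃ B ∈ ℬ, I ⊆ B)

/-- The collection of maximal (with respect to inclusion) members of `ℐ`. -/
def maximalMembers (ℐ : Finset (Finset ℤ)) : Finset (Finset ℤ) :=
  ℐ.filter (fun B => ∀ I ∈ ℐ, B ⊆ I → I = B)

/-- The independent-set exchange property for symplectic matroids. -/
def ExchangeProp (ℐ : Finset (Finset ℤ)) : Prop :=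
  ∀ I ∈ ℐ, ∀ J ∈ ℐ, I.card < J.card →
    (∀ y ∈ J \ I, insert y I ∉ ℐ) →
      ¬ IsAdmissibleSet (I ∪ J) ∧
        ∃ x, x ∉ I ∧ insert x I ∈ ℐ ∧ insert (-x) (I \ negSet J) ∈ ℐ

/-- The `w`-values of the elements of `S`, listed from largest to smallest.
Since the admissible ordering induced by `w` compares `x ≺ y ↔ w x < w y`, the
`i`-th entry of this list is the `w`-value of the `i`-th largest element of `S`
with respect to that ordering. -/
def descValues (w : Equiv.Perm ℤ) (S : Finset ℤ) : List ℤ :=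
  ((S.image w).sort (· ≤ ·)).reverse

/-!
The greedy solution `B` rejects every `z ∉ B`: `z` together with the elements of `B` above `z`
is not independent. Given thresholds `a < b` (in `w`-values), let `I` be the elements of `B`
above `a` and `J` the elements of `B'` at or above `b`. If `|I| < |J|`, no `y ∈ J \ I` extends
`I`, so the exchange property yields `x` with `I + x` and `(I \ -J) + (-x)` independent.
Rejection forces both `w x ≤ a` and `-w x ≤ a`, hence `a > 0`; but then all of `I ∪ J` lies
strictly above `0`, so `I ∪ J` is admissible, contradicting the exchange property.
Thus `|J| ≤ |I|` for all `a < b`, and reading this off at the `i`-th values of `B` and `B'`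
gives the pointwise domination.
-/

section GreedyAux

variable (f : ℤ → ℤ) (ℬ : Finset (Finset ℤ))

theorem greedyAux_sublist : ∀ (l : List ℤ) (C : Finset ℤ), List.Sublist (greedyAux ℬ l C) l
  | [], _ => by simp [greedyAux]
  | a :: l, C => by
    rw [greedyAux]
    split_ifs
    · exact (greedyAux_sublist l _).cons_cons a
    · exact (greedyAux_sublist l C).cons a

theorem exists_superset_union_greedyAux :
    ∀ (l : List ℤ) {C : Finset ℤ}, (∃ M ∈ ℬ, C ⊆ M) →
      ∃ M ∈ ℬ, C ∪ (greedyAux ℬ l C).toFinset ⊆ M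
  | [], C, hC => by simpa [greedyAux] using hC
  | a :: l, C, hC => by
    rw [greedyAux]
    split_ifs with ha
    · rw [List.toFinset_cons, Finset.union_insert, ← Finset.insert_union]
      exact exists_superset_union_greedyAux l ha
    · exact exists_superset_union_greedyAux l hC

theorem not_exists_superset_insert_filter_greedyAux :
    ∀ (l : List ℤ) (C : Finset ℤ), l.Pairwise (fun a b => f b < f a) →
      (∀ a ∈ l, ∀ c ∈ C, f a < f c) → ∀ z ∈ l, z ∉ C ∪ (greedyAux ℬ l C).toFinset →
        ¬ ∃ M ∈ ℬ, insert z ((C ∪ (greedyAux ℬ l C).toFinset).filter (fun c => f z < f c)) ⊆ M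
  | [], _, _, _, z, hz, _ => absurd hz List.not_mem_nil
  | a :: l, C, hl, hlC, z, hz, hzC => by
    obtain ⟨hla, hl⟩ := List.pairwise_cons.mp hl
    rw [greedyAux] at hzC ⊢
    split_ifs at hzC ⊢ with ha
    · rw [List.toFinset_cons, Finset.union_insert, ← Finset.insert_union] at hzC ⊢
      have hz : z ∈ l := by
        rcases List.mem_cons.mp hz with rfl | hz
        · exact absurd (Finset.mem_union_left _ (Finset.mem_insert_self z C)) hzC
        · exact hz
      refine not_exists_superset_insert_filter_greedyAux l _ hl (fun a' ha' c hc => ?_) z hz hzC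
      rcases Finset.mem_insert.mp hc with rfl | hc
      · exact hla a' ha'
      · exact hlC a' (List.mem_cons_of_mem a ha') c hc
    · rcases List.mem_cons.mp hz with rfl | hz
      · -- the elements picked after `z` all lie below it, so only `C` survives the filter
        suffices (C ∪ (greedyAux ℬ l C).toFinset).filter (fun c => f z < f c) = C by
          rwa [this]
        ext c
        simp only [Finset.mem_filter, Finset.mem_union, List.mem_toFinset]
        refine ⟨?_, fun hc => ⟨Or.inl hc, hlC z List.mem_cons_self c hc⟩⟩
        rintro ⟨hc | hc, hzc⟩
        · exact hc
        · exact absurd (hla c ((greedyAux_sublist ℬ l C).mem hc)) (lt_asymm hzc)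
      · exact not_exists_superset_insert_filter_greedyAux l C hl
          (fun a' ha' => hlC a' (List.mem_cons_of_mem a ha')) z hz hzC

end GreedyAux

section MaximalMembers

variable {ℐ : Finset (Finset ℤ)} {C : Finset ℤ}

theorem exists_mem_maximalMembers_superset (hC : C ∈ ℐ) : ∃ M ∈ maximalMembers ℐ, C ⊆ M := by
  obtain ⟨M, hCM, hM⟩ := ℐ.exists_le_maximal hC
  exact ⟨M, Finset.mem_filter.mpr ⟨hM.prop, fun I hI hMI => hM.eq_of_ge hI hMI⟩, hCM⟩

theorem exists_mem_maximalMembers_superset_iff (hclosed : ∀ I ∈ ℐ, ∀ I' ⊆ I, I' ∈ ℐ) :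
    (∃ M ∈ maximalMembers ℐ, C ⊆ M) ↔ C ∈ ℐ :=
  ⟨fun ⟨M, hM, hCM⟩ => hclosed M (Finset.mem_filter.mp hM).1 C hCM,
    exists_mem_maximalMembers_superset⟩

end MaximalMembers

section OrderList

variable {n : ℕ} {w : Equiv.Perm ℤ}

theorem IsAdmissiblePerm.image_sympE (hw : IsAdmissiblePerm n w) :
    (SympE n).image w = SympE n :=
  Finset.eq_of_subset_of_card_le (Finset.image_subset_iff.mpr hw.1)
    (Finset.card_image_of_injective _ w.injective).ge

theorem IsAdmissiblePerm.apply_mem_sympE_iff (hw : IsAdmissiblePerm n w) {x : ℤ} :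
    w x ∈ SympE n ↔ x ∈ SympE n := by
  conv_lhs => rw [← hw.image_sympE]
  exact w.injective.mem_finset_image

theorem mem_orderList (hw : IsAdmissiblePerm n w) {x : ℤ} : x ∈ orderList n w ↔ x ∈ SympE n := by
  simpa [orderList, Equiv.symm_apply_eq] using hw.apply_mem_sympE_iff

theorem orderList_pairwise (n : ℕ) (w : Equiv.Perm ℤ) :
    (orderList n w).Pairwise (fun a b => w b < w a) := by
  rw [orderList, List.pairwise_map]
  refine (List.pairwise_reverse.mpr (Finset.sortedLT_sort (SympE n)).pairwise).imp ?_
  simp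

end OrderList

section GreedySol

variable {n : ℕ} {ℐ : Finset (Finset ℤ)} {w : Equiv.Perm ℤ}

theorem greedySol_mem (hne : ℐ.Nonempty) (hclosed : ∀ I ∈ ℐ, ∀ I' ⊆ I, I' ∈ ℐ) :
    greedySol n (maximalMembers ℐ) w ∈ ℐ := by
  obtain ⟨C, hC⟩ := hne
  obtain ⟨M, hM, -⟩ := exists_mem_maximalMembers_superset hC
  have := exists_superset_union_greedyAux (maximalMembers ℐ) (orderList n w)
    ⟨M, hM, Finset.empty_subset M⟩
  rwa [Finset.empty_union, exists_mem_maximalMembers_superset_iff hclosed] at this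

theorem insert_filter_greedySol_notMem (hclosed : ∀ I ∈ ℐ, ∀ I' ⊆ I, I' ∈ ℐ)
    (hE : ∀ I ∈ ℐ, I ⊆ SympE n) (hw : IsAdmissiblePerm n w) {z : ℤ}
    (hz : z ∉ greedySol n (maximalMembers ℐ) w) :
    insert z ((greedySol n (maximalMembers ℐ) w).filter (fun c => w z < w c)) ∉ ℐ := by
  intro hmem
  have hzE : z ∈ SympE n := hE _ hmem (Finset.mem_insert_self z _)
  refine not_exists_superset_insert_filter_greedyAux w (maximalMembers ℐ) (orderList n w) ∅
    (orderList_pairwise n w) (by simp) z ((mem_orderList hw).mpr hzE) ?_ ?_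
  · rwa [Finset.empty_union]
  · rwa [Finset.empty_union, exists_mem_maximalMembers_superset_iff hclosed]

end GreedySol

section Exchange

variable {ℐ : Finset (Finset ℤ)} {w : Equiv.Perm ℤ} {B : Finset ℤ}

theorem IsAdmissibleSet.ne_zero {S : Finset ℤ} (hS : IsAdmissibleSet S) {x : ℤ} (hx : x ∈ S) :
    x ≠ 0 := by
  rintro rfl
  exact hS 0 hx (by simpa using hx)

theorem insert_notMem_of_filter_subset (hclosed : ∀ I ∈ ℐ, ∀ I' ⊆ I, I' ∈ ℐ)
    (hrej : ∀ z ∉ B, insert z (B.filter (fun c => w z < w c)) ∉ ℐ) {y : ℤ} {T : Finset ℤ}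
    (hy : y ∉ B) (hT : B.filter (fun c => w y < w c) ⊆ T) : insert y T ∉ ℐ :=
  fun h => hrej y hy (hclosed _ h _ (Finset.insert_subset_insert y hT))

theorem card_filter_le_card_filter_of_rejects (hclosed : ∀ I ∈ ℐ, ∀ I' ⊆ I, I' ∈ ℐ)
    (hadm : ∀ I ∈ ℐ, IsAdmissibleSet I) (hex : ExchangeProp ℐ) (hw : ∀ x, w (-x) = -w x)
    (hB : B ∈ ℐ) (hrej : ∀ z ∉ B, insert z (B.filter (fun c => w z < w c)) ∉ ℐ)
    {B' : Finset ℤ} (hB' : B' ∈ ℐ) {a b : ℤ} (hab : a < b) :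
    (B'.filter (fun y => b ≤ w y)).card ≤ (B.filter (fun z => a < w z)).card := by
  set I := B.filter (fun z => a < w z)
  set J := B'.filter (fun y => b ≤ w y)
  have hI_notMem : ∀ y ∉ B, a < w y → insert y I ∉ ℐ := fun y hy hay =>
    insert_notMem_of_filter_subset hclosed hrej hy
      (Finset.monotone_filter_right B fun c _ hc => hay.trans hc)
  by_contra! hIJ
  obtain ⟨hIJ_adm, x, hxI, hxI_mem, hnegx_mem⟩ :=
    hex I (hclosed B hB I (Finset.filter_subset _ _))
      J (hclosed B' hB' J (Finset.filter_subset _ _)) hIJ fun y hy => by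
        obtain ⟨hyJ, hyI⟩ := Finset.mem_sdiff.mp hy
        have hay : a < w y := hab.trans_le (Finset.mem_filter.mp hyJ).2
        exact hI_notMem y (fun hyB => hyI (Finset.mem_filter.mpr ⟨hyB, hay⟩)) hay
  have hxa : w x ≤ a := by
    by_contra! hax
    exact hI_notMem x (fun hxB => hxI (Finset.mem_filter.mpr ⟨hxB, hax⟩)) hax hxI_mem
  have hnxa : -w x ≤ a := by
    by_contra! hax
    have hnxB : -x ∉ B := fun hnxB =>
      hadm _ hxI_mem x (Finset.mem_insert_self x I)
        (Finset.mem_insert_of_mem (Finset.mem_filter.mpr ⟨hnxB, by rwa [hw]⟩))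
    refine insert_notMem_of_filter_subset hclosed hrej hnxB (fun c hc => ?_) hnegx_mem
    obtain ⟨hcB, hxc⟩ := Finset.mem_filter.mp hc
    rw [hw] at hxc
    refine Finset.mem_sdiff.mpr ⟨Finset.mem_filter.mpr ⟨hcB, hax.trans hxc⟩, fun hcJ => ?_⟩
    obtain ⟨y, hyJ, rfl⟩ := Finset.mem_image.mp hcJ
    have := (Finset.mem_filter.mp hyJ).2
    rw [hw] at hxc
    omega
  have hx0 : w x ≠ 0 := by
    have hw0 : w 0 = 0 := by
      have := hw 0
      rw [neg_zero] at this
      omega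
    rw [← hw0, w.injective.ne_iff]
    exact (hadm _ hxI_mem).ne_zero (Finset.mem_insert_self x I)
  -- `hxa`, `hnxa` and `hx0` give `0 < a`
  have hpos : ∀ u ∈ I ∪ J, 0 < w u := by
    intro u hu
    rcases Finset.mem_union.mp hu with hu | hu <;> have := (Finset.mem_filter.mp hu).2 <;> omega
  obtain ⟨t, ht, hnt⟩ : ∃ t ∈ I ∪ J, -t ∈ I ∪ J := by
    simpa only [IsAdmissibleSet, not_forall, not_not, exists_prop] using hIJ_adm
  have := hpos (-t) hnt
  have := hpos t ht
  rw [hw] at *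
  omega

end Exchange

theorem List.SortedGT.card_toFinset_filter_getElem_lt {α : Type*} [LinearOrder α]
    {L : List α} (hL : L.SortedGT) {k : ℕ} (hk : k < L.length) :
    (L.toFinset.filter (L[k] < ·)).card = k := by
  have : L.toFinset.filter (L[k] < ·) = (L.take k).toFinset := by
    ext x
    simp only [Finset.mem_filter, List.mem_toFinset, List.mem_iff_getElem, List.length_take,
      List.getElem_take, lt_min_iff]
    constructor
    · rintro ⟨⟨j, hj, rfl⟩, hkj⟩
      exact ⟨j, ⟨(hL.getElem_lt_getElem_iff).mp hkj, hj⟩, rfl⟩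
    · rintro ⟨j, ⟨hjk, hj⟩, rfl⟩
      exact ⟨⟨j, hj, rfl⟩, (hL.getElem_lt_getElem_iff).mpr hjk⟩
  rw [this, List.toFinset_card_of_nodup (hL.nodup.sublist (List.take_sublist k L)),
    List.length_take, min_eq_left hk.le]

theorem List.SortedGT.card_toFinset_filter_getElem_le {α : Type*} [LinearOrder α]
    {L : List α} (hL : L.SortedGT) {k : ℕ} (hk : k < L.length) :
    (L.toFinset.filter (L[k] ≤ ·)).card = k + 1 := by
  have : L.toFinset.filter (L[k] ≤ ·) = (L.take (k + 1)).toFinset := by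
    ext x
    simp only [Finset.mem_filter, List.mem_toFinset, List.mem_iff_getElem, List.length_take,
      List.getElem_take, lt_min_iff]
    constructor
    · rintro ⟨⟨j, hj, rfl⟩, hkj⟩
      exact ⟨j, ⟨Nat.lt_succ_of_le ((hL.getElem_le_getElem_iff).mp hkj), hj⟩, rfl⟩
    · rintro ⟨j, ⟨hjk, hj⟩, rfl⟩
      exact ⟨⟨j, hj, rfl⟩, (hL.getElem_le_getElem_iff).mpr (Nat.le_of_lt_succ hjk)⟩
  rw [this, List.toFinset_card_of_nodup (hL.nodup.sublist (List.take_sublist _ L)),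
    List.length_take, min_eq_left hk]

section DescValues

variable (w : Equiv.Perm ℤ) (S : Finset ℤ)

theorem sortedGT_descValues : (descValues w S).SortedGT :=
  List.sortedGT_reverse.mpr (Finset.sortedLT_sort _)

theorem toFinset_descValues : (descValues w S).toFinset = S.image w := by
  rw [descValues, List.toFinset_reverse, Finset.sort_toFinset]

theorem length_descValues : (descValues w S).length = S.card := by
  rw [descValues, List.length_reverse, Finset.length_sort,
    Finset.card_image_of_injective _ w.injective]

variable {w S}

theorem card_filter_descValues_getElem_lt {k : ℕ} (hk : k < (descValues w S).length) :
    (S.filter (fun z => (descValues w S)[k] < w z)).card = k := by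
  have := (sortedGT_descValues w S).card_toFinset_filter_getElem_lt hk
  rwa [toFinset_descValues, Finset.filter_image, Finset.card_image_of_injective _ w.injective]
    at this

theorem card_filter_descValues_getElem_le {k : ℕ} (hk : k < (descValues w S).length) :
    (S.filter (fun z => (descValues w S)[k] ≤ w z)).card = k + 1 := by
  have := (sortedGT_descValues w S).card_toFinset_filter_getElem_le hk
  rwa [toFinset_descValues, Finset.filter_image, Finset.card_image_of_injective _ w.injective]
    at this

theorem exists_descValues_getElem?_le_of_card_filter_le {S' : Finset ℤ}
    (hdom : ∀ a b : ℤ, a < b →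
      (S'.filter (fun y => b ≤ w y)).card ≤ (S.filter (fun z => a < w z)).card)
    {k : ℕ} (hk : k < S'.card) :
    ∃ a b : ℤ, (descValues w S)[k]? = some a ∧ (descValues w S')[k]? = some b ∧ b ≤ a := by
  have hk' : k < (descValues w S').length := by rwa [length_descValues]
  have hb := card_filter_descValues_getElem_le hk'
  have hkS : k < (descValues w S).length := by
    have := hdom _ _ (sub_one_lt (descValues w S')[k])
    have := Finset.card_filter_le S (fun z => (descValues w S')[k] - 1 < w z)
    rw [length_descValues]
    omega
  refine ⟨_, _, List.getElem?_eq_getElem hkS, List.getElem?_eq_getElem hk', ?_⟩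
  by_contra! hab
  have := hdom _ _ hab
  rw [card_filter_descValues_getElem_lt hkS] at this
  omega

end DescValues

theorem greedy_dominates_pointwise_general (n : ℕ) (ℐ : Finset (Finset ℤ))
    (hne : ℐ.Nonempty)
    (hclosed : ∀ I ∈ ℐ, ∀ I' ⊆ I, I' ∈ ℐ)
    (hadm : ∀ I ∈ ℐ, I ⊆ SympE n ∧ IsAdmissibleSet I)
    (hex : ExchangeProp ℐ)
    (w : Equiv.Perm ℤ) (hw : IsAdmissiblePerm n w)
    (B B' : Finset ℤ)
    (hB : B = greedySol n (maximalMembers ℐ) w)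
    (hB' : B' ∈ maximalMembers ℐ)
    (i : ℕ) (h1 : 1 ≤ i) (h2 : i ≤ B'.card) :
    ∃ a b : ℤ, (descValues w B)[i - 1]? = some a ∧
      (descValues w B')[i - 1]? = some b ∧ b ≤ a := by
  subst hB
  refine exists_descValues_getElem?_le_of_card_filter_le (fun a b hab => ?_) (by omega)
  exact card_filter_le_card_filter_of_rejects hclosed (fun I hI => (hadm I hI).2) hex hw.2
    (greedySol_mem hne hclosed)
    (fun _ => insert_filter_greedySol_notMem hclosed (fun I hI => (hadm I hI).1) hw)
    (Finset.mem_filter.mp hB').1 hab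

/-- Let `ℐ` be a nonempty subset-closed family of admissible subsets of
`E_{±n}` with the exchange property, let `ℬ` be the collection of maximal
members of `ℐ`, let `B` be the member of `ℬ` chosen by the greedy algorithm with
respect to an admissible ordering, and let `B'` be any other member of `ℬ`.
Then for every `1 ≤ i ≤ |B'|`, the `i`-th largest element of `B` is no smaller
than the `i`-th largest element of `B'` with respect to the ordering. -/
theorem greedy_dominates_pointwise (n : ℕ) (hn : 0 < n) (ℐ : Finset (Finset ℤ))
    (hne : ℐ.Nonempty)
    (hclosed : ∀ I ∈ ℐ, ∀ I' ⊆ I, I' ∈ ℐ)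
    (hadm : ∀ I ∈ ℐ, I ⊆ SympE n ∧ IsAdmissibleSet I)
    (hex : ExchangeProp ℐ)
    (w : Equiv.Perm ℤ) (hw : IsAdmissiblePerm n w)
    (B B' : Finset ℤ)
    (hB : B = greedySol n (maximalMembers ℐ) w)
    (hB' : B' ∈ maximalMembers ℐ)
    (i : ℕ) (h1 : 1 ≤ i) (h2 : i ≤ B'.card) :
    ∃ a b : ℤ, (descValues w B)[i - 1]? = some a ∧
      (descValues w B')[i - 1]? = some b ∧ b ≤ a :=
  greedy_dominates_pointwise_general n ℐ hne hclosed hadm hex w hw B B' hB hB' i h1 h2
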